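/- Backward submartingale uniform integrability: let (X_n, E_n) be a backward submartingale with F = E_∞ and suppose Y = inf_n F(X_n) exists in E. Then the sequence (X_n) is L¹-uniformly integrable, i.e., for every φ ∈ Φ, p_φ(P_{(|X_n| ≥ λe)}|X_n|) → 0 as λ → ∞ uniformly in n. -/

import Mathlib

variable {E : Type*} [AddCommGroup E] [Lattice E]
  [CovariantClass E E (· + ·) (· ≤ ·)] [Module ℝ E]

/-- `E` is Dedekind complete. -/
def DedekindComplete (E : Type*) [AddCommGroup E] [Lattice E] : Prop :=
  ∀ A : Set E, A.Nonempty → BddAbove A → ∃ s, IsLUB A s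

/-- `e` is a weak order unit. -/
def IsWeakUnit (e : E) : Prop :=
  0 < e ∧ ∀ x : E, 0 ≤ x → IsLUB (Set.range fun n : ℕ => x ⊓ n • e) x

/-- A conditional expectation with respect to the weak order unit `e`. -/
def IsCondExp (e : E) (F : E →ₗ[ℝ] E) : Prop :=
  (∀ x, F (F x) = F x) ∧ (∀ x : E, 0 < x → 0 < F x) ∧ F e = e ∧
  ∀ V : ℕ → E, Antitone V → IsGLB (Set.range V) 0 →
    IsGLB (Set.range fun n => F (V n)) 0

/-- `(X, En)` is a backward submartingale: the conditional expectations `En` are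
decreasing (`En n (En m x) = En m (En n x) = En m x` for `n ≤ m`), each `X n`
lies in the range of `En n`, and `En (n+1) (X n) ≥ X (n+1)`. -/
def IsBackwardSubmartingale (e : E) (En : ℕ → (E →ₗ[ℝ] E)) (X : ℕ → E) : Prop :=
  (∀ n, IsCondExp e (En n)) ∧
  (∀ n m : ℕ, n ≤ m → ∀ x : E, En n (En m x) = En m x ∧ En m (En n x) = En m x) ∧
  (∀ n, En n (X n) = X n) ∧
  (∀ n, X (n + 1) ≤ En (n + 1) (X n))

/-- A band (order) projection. -/
def IsBandProj (P : E →ₗ[ℝ] E) : Prop :=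
  (∀ x, P (P x) = P x) ∧ ∀ x : E, 0 ≤ x → 0 ≤ P x ∧ P x ≤ x

/-- `P` is the band projection onto the band generated by `u ≥ 0`. -/
def IsProjOnBandGen (P : E →ₗ[ℝ] E) (u : E) : Prop :=
  IsBandProj P ∧ ∀ x : E, 0 ≤ x → IsLUB (Set.range fun n : ℕ => x ⊓ n • u) (P x)

/-- A positive, normalized, order continuous functional. -/
def IsNormedFunctional (e : E) (φ : E →ₗ[ℝ] ℝ) : Prop :=
  (∀ x : E, 0 ≤ x → 0 ≤ φ x) ∧ φ e = 1 ∧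
  ∀ V : ℕ → E, Antitone V → IsGLB (Set.range V) 0 →
    Filter.Tendsto (fun n => φ (V n)) Filter.atTop (nhds 0)

/-- `Φ` is a separating family of normalized positive order continuous functionals. -/
def IsSeparatingFamily (e : E) (Φ : Set (E →ₗ[ℝ] ℝ)) : Prop :=
  (∀ φ ∈ Φ, IsNormedFunctional e φ) ∧ ∀ x : E, (∀ φ ∈ Φ, φ x = 0) → x = 0

/-- `L¹`-uniform integrability. -/
def UnifInt (F : E →ₗ[ℝ] E) (Φ : Set (E →ₗ[ℝ] ℝ)) (X : ℕ → E)
    (P : ℕ → ℝ → (E →ₗ[ℝ] E)) : Prop :=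
  ∀ φ ∈ Φ, ∀ ε : ℝ, 0 < ε → ∃ l₀ : ℝ, ∀ l : ℝ, l₀ ≤ l → ∀ n : ℕ,
    φ (F (P n l |X n|)) < ε

/-!
Put `ψ = φ ∘ F`: it is positive, order continuous and invariant under every `En n`. Iterating the
submartingale inequality gives `X n ≤ En n (X m)` for `m ≤ n`, so `ψ (X n)` decreases and stays
above `φ Y`, while `ψ |X n| = 2 ψ (X n)⁺ - ψ (X n) ≤ 2 ψ (X 0)⁺ - φ Y`. By Chebyshev's inequality
`ψ (P n l e) = O(1 / l)` uniformly in `n`.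

For `j ≤ n`, positivity of `P` and of `1 - P` bounds `ψ (P |X n|)` by
`2 ψ (P (En n (X 0)⁺)) + ψ (P (En n |X j|)) + (ψ (X j) - ψ (X n))`, and truncation at level `k • e`
bounds each `ψ (P (En n z))` by `k ψ (P e) + ψ (z - k • e)⁺`. Take `j = min n m` with `ψ (X m)`
close to the infimum of `ψ (X n)`, then `k` making the finitely many tails small (order
continuity), then `l` large.
-/

open Filter Topology

section LatticeOrderedGroup

variable {α : Type*} [AddCommGroup α] [Lattice α] [AddLeftMono α]

lemma inf_add_le_inf_add_inf {a b c : α} (ha : 0 ≤ a) (hb : 0 ≤ b) (hc : 0 ≤ c) :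
    c ⊓ (a + b) ≤ c ⊓ a + c ⊓ b := by
  rw [inf_add c a (c ⊓ b), add_inf, add_inf, inf_inf_inf_comm]
  refine le_inf (le_inf ?_ ?_) (le_inf ?_ inf_le_right)
  · exact inf_le_left.trans (le_add_of_nonneg_right hc)
  · exact inf_le_left.trans (le_add_of_nonneg_left ha)
  · exact inf_le_left.trans (le_add_of_nonneg_right hb)

lemma inf_nsmul_eq_zero_of_inf_eq_zero {u w : α} (hu : 0 ≤ u) (hw : 0 ≤ w) (hwu : w ⊓ u = 0)
    (n : ℕ) : w ⊓ n • u = 0 := by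
  induction n with
  | zero => simpa using hw
  | succ n ih =>
    refine le_antisymm ?_ (le_inf hw (nsmul_nonneg hu _))
    calc w ⊓ (n + 1) • u ≤ w ⊓ n • u + w ⊓ u := by
          rw [succ_nsmul]; exact inf_add_le_inf_add_inf (nsmul_nonneg hu n) hu hw
      _ = 0 := by rw [ih, hwu, add_zero]

lemma antitone_posPart_sub_nsmul {e : α} (he : 0 ≤ e) (z : α) :
    Antitone fun k : ℕ => (z - k • e)⁺ :=
  fun _ _ hk => posPart_mono (sub_le_sub_left (nsmul_le_nsmul_left he hk) z)

lemma IsWeakUnit.isGLB_posPart_sub_nsmul {e : α} (he : IsWeakUnit e) {z : α} (hz : 0 ≤ z) :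
    IsGLB (Set.range fun k : ℕ => (z - k • e)⁺) 0 := by
  refine ⟨by rintro _ ⟨k, rfl⟩; exact posPart_nonneg _, fun b hb => ?_⟩
  have hub : ∀ k : ℕ, z ⊓ k • e ≤ z - b := fun k => by
    have h : z - z ⊓ k • e = (z - k • e)⁺ := by rw [sub_inf, sub_self, sup_comm, posPart_def]
    exact le_sub_comm.mp (h ▸ hb ⟨k, rfl⟩)
  have hz' : z ≤ z - b := (he.2 z hz).2 (by rintro _ ⟨k, rfl⟩; exact hub k)
  exact (le_sub_self_iff z).mp hz'

end LatticeOrderedGroup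

lemma LinearMap.monotone_of_map_nonneg {R G H : Type*} [Semiring R]
    [AddCommGroup G] [Preorder G] [AddLeftMono G] [Module R G]
    [AddCommGroup H] [Preorder H] [AddLeftMono H] [Module R H]
    {T : G →ₗ[R] H} (hT : ∀ x, 0 ≤ x → 0 ≤ T x) : Monotone T := fun a b hab => by
  simpa using hT (b - a) (sub_nonneg.2 hab)

lemma LinearMap.map_abs_eq (f : E →ₗ[ℝ] ℝ) (a : E) : f |a| = 2 * f a⁺ - f a := by
  have h := congrArg f (add_abs_eq_two_nsmul_posPart a)
  rw [map_add, map_nsmul, nsmul_eq_mul] at h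
  push_cast at h
  linarith

lemma IsCondExp.monotone {e : E} {T : E →ₗ[ℝ] E} (hT : IsCondExp e T) : Monotone T :=
  LinearMap.monotone_of_map_nonneg fun x hx => by
    rcases hx.eq_or_lt with rfl | hx
    · rw [map_zero]
    · exact (hT.2.1 x hx).le

lemma IsCondExp.map_nonneg {e : E} {T : E →ₗ[ℝ] E} (hT : IsCondExp e T) {x : E} (hx : 0 ≤ x) :
    0 ≤ T x := by
  simpa using hT.monotone hx

def IsSeqOrderContinuous (ψ : E →ₗ[ℝ] ℝ) : Prop :=
  ∀ V : ℕ → E, Antitone V → IsGLB (Set.range V) 0 → Tendsto (fun n => ψ (V n)) atTop (𝓝 0)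

lemma IsNormedFunctional.isSeqOrderContinuous_comp {e : E} {φ : E →ₗ[ℝ] ℝ} {F : E →ₗ[ℝ] E}
    (hφ : IsNormedFunctional e φ) (hF : IsCondExp e F) : IsSeqOrderContinuous (φ ∘ₗ F) :=
  fun V hV h0 => hφ.2.2 _ (hF.monotone.comp_antitone hV) (hF.2.2.2 V hV h0)

lemma IsSeqOrderContinuous.tendsto_posPart_sub_nsmul {ψ : E →ₗ[ℝ] ℝ} {e : E}
    (hψ : IsSeqOrderContinuous ψ) (he : IsWeakUnit e) {z : E} (hz : 0 ≤ z) :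
    Tendsto (fun k : ℕ => ψ (z - k • e)⁺) atTop (𝓝 0) :=
  hψ _ (antitone_posPart_sub_nsmul he.1.le z) (he.isGLB_posPart_sub_nsmul hz)

lemma IsProjOnBandGen.map_of_nonneg {V : Type*} [AddCommGroup V] [Lattice V] [Module ℝ V]
    {Pr : V →ₗ[ℝ] V} {u : V} (hPr : IsProjOnBandGen Pr u) (hu : 0 ≤ u) : Pr u = u := by
  refine (hPr.2 u hu).unique ⟨by rintro _ ⟨n, rfl⟩; exact inf_le_left, fun b hb => ?_⟩
  simpa using hb ⟨1, rfl⟩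

namespace IsProjOnBandGen

variable {Pr : E →ₗ[ℝ] E} {u : E}

lemma map_eq_zero_of_inf_eq_zero (hPr : IsProjOnBandGen Pr u) (hu : 0 ≤ u) {w : E}
    (hw : 0 ≤ w) (hwu : w ⊓ u = 0) : Pr w = 0 := by
  have h := inf_nsmul_eq_zero_of_inf_eq_zero hu hw hwu
  exact (hPr.2 w hw).unique ⟨by rintro _ ⟨n, rfl⟩; exact (h n).le, fun b hb => hb ⟨0, h 0⟩⟩

/-- Chebyshev's inequality: `Pr` fixes `(z - l • e)⁺` and kills `(z - l • e)⁻`. -/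
lemma smul_map_le_map {z e : E} {l : ℝ} (hPr : IsProjOnBandGen Pr (z - l • e)⁺) :
    l • Pr e ≤ Pr z := by
  have hneg : Pr (z - l • e)⁻ = 0 := hPr.map_eq_zero_of_inf_eq_zero (posPart_nonneg _)
    (negPart_nonneg _) (by rw [inf_comm, posPart_inf_negPart_eq_zero])
  have h : Pr (z - l • e) = (z - l • e)⁺ := by
    conv_lhs => rw [← posPart_sub_negPart (z - l • e)]
    rw [map_sub, hneg, sub_zero, hPr.map_of_nonneg (posPart_nonneg _)]
  have h0 := posPart_nonneg (z - l • e)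
  rwa [← h, map_sub, map_smul, sub_nonneg] at h0

end IsProjOnBandGen

lemma exists_forall_apply_min_sub_lt {u : ℕ → ℝ} (hu : BddBelow (Set.range u)) {δ : ℝ}
    (hδ : 0 < δ) : ∃ m, ∀ n, u (min n m) - u n < δ := by
  obtain ⟨m, hm⟩ := exists_lt_of_ciInf_lt (lt_add_of_pos_right (⨅ n, u n) hδ)
  refine ⟨m, fun n => ?_⟩
  rcases le_total n m with h | h
  · simpa [min_eq_left h] using hδ
  · rw [min_eq_right h]
    linarith [ciInf_le hu n]

section Truncation

variable {ψ : E →ₗ[ℝ] ℝ} {Q : E →ₗ[ℝ] E}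

lemma map_le_of_le_nsmul_add (hψ : Monotone ψ) (hQ : ∀ x, 0 ≤ x → 0 ≤ Q x ∧ Q x ≤ x)
    {z e S : E} {k : ℕ} (hz : z ≤ k • e + S) (hS : 0 ≤ S) :
    ψ (Q z) ≤ k * ψ (Q e) + ψ S := by
  have hQm : Monotone Q := LinearMap.monotone_of_map_nonneg fun x hx => (hQ x hx).1
  calc ψ (Q z) ≤ ψ (Q (k • e + S)) := hψ (hQm hz)
    _ = k * ψ (Q e) + ψ (Q S) := by rw [map_add, map_add, map_nsmul, map_nsmul, nsmul_eq_mul]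
    _ ≤ k * ψ (Q e) + ψ S := by gcongr; exact hψ (hQ S hS).2

lemma map_condExp_le (hψ : Monotone ψ) (hQ : ∀ x, 0 ≤ x → 0 ≤ Q x ∧ Q x ≤ x)
    {e : E} {T : E →ₗ[ℝ] E} (hT : IsCondExp e T) (hψT : ∀ x, ψ (T x) = ψ x) (z : E) (k : ℕ) :
    ψ (Q (T z)) ≤ k * ψ (Q e) + ψ (z - k • e)⁺ := by
  have hz : T z ≤ k • e + T (z - k • e)⁺ := by
    simpa [hT.2.2.1] using hT.monotone (sub_le_iff_le_add'.mp (le_posPart (z - k • e)))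
  simpa [hψT] using map_le_of_le_nsmul_add hψ hQ hz (hT.map_nonneg (posPart_nonneg _))

end Truncation

namespace IsBackwardSubmartingale

variable {e : E} {En : ℕ → E →ₗ[ℝ] E} {X : ℕ → E} {ψ : E →ₗ[ℝ] ℝ}

lemma le_map_of_le (hX : IsBackwardSubmartingale e En X) {m n : ℕ} (hmn : m ≤ n) :
    X n ≤ En n (X m) := by
  induction n, hmn using Nat.le_induction with
  | base => exact (hX.2.2.1 m).ge
  | succ n hmn ih =>
    calc X (n + 1) ≤ En (n + 1) (X n) := hX.2.2.2 n
      _ ≤ En (n + 1) (En n (X m)) := (hX.1 _).monotone ih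
      _ = En (n + 1) (X m) := (hX.2.1 n (n + 1) n.le_succ (X m)).2

lemma posPart_le_map_posPart (hX : IsBackwardSubmartingale e En X) (n : ℕ) :
    (X n)⁺ ≤ En n (X 0)⁺ :=
  sup_le ((hX.le_map_of_le n.zero_le).trans ((hX.1 n).monotone (le_posPart _)))
    ((hX.1 n).map_nonneg (posPart_nonneg _))

lemma map_abs_le (hX : IsBackwardSubmartingale e En X) (hψ : Monotone ψ)
    (hψEn : ∀ n x, ψ (En n x) = ψ x) {b : ℝ} (hb : ∀ n, b ≤ ψ (X n)) (n : ℕ) :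
    ψ |X n| ≤ 2 * ψ (X 0)⁺ - b := by
  have h := hψ (hX.posPart_le_map_posPart n)
  rw [hψEn] at h
  linarith [ψ.map_abs_eq (X n), hb n]

lemma map_abs_le_of_le (hX : IsBackwardSubmartingale e En X) (hψ : Monotone ψ)
    (hψEn : ∀ n x, ψ (En n x) = ψ x) {Q : E →ₗ[ℝ] E} (hQ : ∀ x, 0 ≤ x → 0 ≤ Q x ∧ Q x ≤ x)
    {j n : ℕ} (hjn : j ≤ n) :
    ψ (Q |X n|) ≤ 2 * ψ (Q (En n (X 0)⁺)) + ψ (Q (En n |X j|)) + (ψ (X j) - ψ (X n)) := by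
  have hQm : Monotone Q := LinearMap.monotone_of_map_nonneg fun x hx => (hQ x hx).1
  have hQc : Monotone ⇑(LinearMap.id - Q : E →ₗ[ℝ] E) :=
    LinearMap.monotone_of_map_nonneg fun x hx => sub_nonneg.2 (hQ x hx).2
  have hpos : ψ (Q (X n)⁺) ≤ ψ (Q (En n (X 0)⁺)) := hψ (hQm (hX.posPart_le_map_posPart n))
  have hcompl : ψ (X n - Q (X n)) ≤ ψ (En n (X j) - Q (En n (X j))) :=
    hψ (by simpa using hQc (hX.le_map_of_le hjn))
  have hneg : -ψ (Q (En n |X j|)) ≤ ψ (Q (En n (X j))) := by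
    simpa using hψ (hQm ((hX.1 n).monotone (neg_le.mpr (neg_le_abs (X j)))))
  have habs : ψ (Q |X n|) = 2 * ψ (Q (X n)⁺) - ψ (Q (X n)) := (ψ ∘ₗ Q).map_abs_eq (X n)
  rw [map_sub, map_sub, hψEn] at hcompl
  linarith

theorem eventually_map_proj_abs_lt (hX : IsBackwardSubmartingale e En X) (he : IsWeakUnit e)
    (hψ : Monotone ψ) (hψc : IsSeqOrderContinuous ψ) (hψEn : ∀ n x, ψ (En n x) = ψ x)
    (hbdd : BddBelow (Set.range fun n => ψ (X n))) {P : ℕ → ℝ → E →ₗ[ℝ] E}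
    (hP : ∀ n (l : ℝ), IsProjOnBandGen (P n l) (|X n| - l • e)⁺) {ε : ℝ} (hε : 0 < ε) :
    ∀ᶠ l in atTop, ∀ n, ψ (P n l |X n|) < ε := by
  obtain ⟨b, hb⟩ := hbdd
  have hcheb (n : ℕ) (l : ℝ) : l * ψ (P n l e) ≤ 2 * ψ (X 0)⁺ - b :=
    calc l * ψ (P n l e) = ψ (l • P n l e) := by rw [map_smul, smul_eq_mul]
      _ ≤ ψ (P n l |X n|) := hψ (hP n l).smul_map_le_map
      _ ≤ ψ |X n| := hψ ((hP n l).1.2 _ (abs_nonneg _)).2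
      _ ≤ 2 * ψ (X 0)⁺ - b := hX.map_abs_le hψ hψEn (fun n => hb ⟨n, rfl⟩) n
  obtain ⟨m, hm⟩ := exists_forall_apply_min_sub_lt ⟨b, hb⟩ (by positivity : 0 < ε / 4)
  have htail {z : E} (hz : 0 ≤ z) := (hψc.tendsto_posPart_sub_nsmul he hz).eventually_lt_const
    (by positivity : (0 : ℝ) < ε / 8)
  obtain ⟨k, hk0, hkj⟩ := ((htail (posPart_nonneg (X 0))).and
    ((Set.finite_Iic m).eventually_all.2 fun j _ => htail (abs_nonneg (X j)))).exists
  filter_upwards [eventually_gt_atTop 0, eventually_ge_atTop (12 * k * (2 * ψ (X 0)⁺ - b) / ε)]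
    with l hl0 hl n
  have hQ := (hP n l).1.2
  have hPe : 0 ≤ ψ (P n l e) := by simpa using hψ (hQ e he.1.le).1
  have hsmall : 3 * k * ψ (P n l e) ≤ ε / 4 := by
    rw [div_le_iff₀ hε] at hl
    nlinarith [hcheb n l, hPe]
  have hsplit := hX.map_abs_le_of_le hψ hψEn hQ (min_le_left n m)
  have hX0 := map_condExp_le hψ hQ (hX.1 n) (hψEn n) (X 0)⁺ k
  have hXj := map_condExp_le hψ hQ (hX.1 n) (hψEn n) |X (min n m)| k
  linarith [hm n, hkj _ (Set.mem_Iic.2 (min_le_right n m))]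

end IsBackwardSubmartingale

theorem backwardSubmartingale_unifInt_general
    (e : E) (he : IsWeakUnit e)
    (En : ℕ → (E →ₗ[ℝ] E)) (X : ℕ → E)
    (hX : IsBackwardSubmartingale e En X)
    (F : E →ₗ[ℝ] E) (hF : IsCondExp e F)
    (hFEn : ∀ n, ∀ x : E, F (En n x) = F x ∧ En n (F x) = F x)
    (Φ : Set (E →ₗ[ℝ] ℝ)) (hΦ : IsSeparatingFamily e Φ)
    (Y : E) (hY : IsGLB (Set.range fun n => F (X n)) Y)
    (P : ℕ → ℝ → (E →ₗ[ℝ] E))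
    (hP : ∀ n (l : ℝ), IsProjOnBandGen (P n l) ((|X n| - l • e) ⊔ 0)) :
    UnifInt F Φ X P := by
  intro φ hφΦ ε hε
  have hφ := hΦ.1 φ hφΦ
  have hφm : Monotone φ := LinearMap.monotone_of_map_nonneg hφ.1
  have hbdd : BddBelow (Set.range fun n => (φ ∘ₗ F) (X n)) :=
    ⟨φ Y, by rintro _ ⟨n, rfl⟩; exact hφm (hY.1 ⟨n, rfl⟩)⟩
  exact eventually_atTop.1 <| hX.eventually_map_proj_abs_lt (ψ := φ ∘ₗ F) he
    (hφm.comp hF.monotone) (hφ.isSeqOrderContinuous_comp hF)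
    (fun n x => congrArg φ (hFEn n x).1) hbdd hP hε

/-- A backward submartingale whose sequence of conditional expectations
`(F (X n))` is bounded below (has an infimum `Y` in `E`) is `L¹`-uniformly
integrable. -/
theorem backwardSubmartingale_unifInt
    (hE : DedekindComplete E) (e : E) (he : IsWeakUnit e)
    (En : ℕ → (E →ₗ[ℝ] E)) (X : ℕ → E)
    (hX : IsBackwardSubmartingale e En X)
    (F : E →ₗ[ℝ] E) (hF : IsCondExp e F)
    (hFEn : ∀ n, ∀ x : E, F (En n x) = F x ∧ En n (F x) = F x)
    (Φ : Set (E →ₗ[ℝ] ℝ)) (hΦ : IsSeparatingFamily e Φ)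
    (Y : E) (hY : IsGLB (Set.range fun n => F (X n)) Y)
    (P : ℕ → ℝ → (E →ₗ[ℝ] E))
    (hP : ∀ n (l : ℝ), IsProjOnBandGen (P n l) ((|X n| - l • e) ⊔ 0)) :
    UnifInt F Φ X P :=
  backwardSubmartingale_unifInt_general e he En X hX F hF hFEn Φ hΦ Y hY P hP
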